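/- arXiv:1507.00847 — 2 statements merged into one kernel-verified Lean document; each statement's English description precedes it below -/
import Mathlib

section
/- Let g be a symmetric bilinear form on ℝⁿ of Lorentzian signature (+,−,...,−) with matrix G in the standard basis, and let t ∈ ℝⁿ satisfy g(t,t) = 1. Define g⁺(v,w) := 2·g(t,v)·g(t,w) − g(v,w) with matrix G⁺. Then det(G⁺) = |det(G)| = (−1)^{n+1} · det(G). -/
/-!
Writing `u = G t`, the matrix of `g⁺` factors as `G⁺ = -G (1 - 2 t uᵀ)`, and `1 - 2 t uᵀ` is the
`g`-reflection in `t`, of determinant `1 - 2 uᵀt = -1`; hence `det G⁺ = (-1)^(n+1) det G`.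
Sylvester's law in its weakest form, `det G · (det P)² = det η = (-1)^(n-1)`, shows that this
number is positive, so it equals `|det G|`.
-/

namespace Matrix

variable {R ι : Type*} [Fintype ι] [DecidableEq ι]

theorem det_one_add_vecMulVec [CommRing R] (u v : ι → R) :
    det (1 + vecMulVec u v) = 1 + v ⬝ᵥ u := by
  rw [vecMulVec_eq Unit, det_one_add_replicateCol_mul_replicateRow]

theorem det_two_mul_mulVec_sub [CommRing R] (G : Matrix ι ι R) (t : ι → R)
    (ht : t ⬝ᵥ G *ᵥ t = 1) :
    (of fun i j => 2 * (G *ᵥ t) i * (G *ᵥ t) j - G i j).det =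
      (-1) ^ (Fintype.card ι + 1) * G.det := by
  set u := G *ᵥ t
  have hfactor :
      (of fun i j => 2 * u i * u j - G i j) = G * -(1 + vecMulVec ((-2 : R) • t) u) := by
    rw [Matrix.mul_neg, Matrix.mul_add, Matrix.mul_one, mul_vecMulVec, mulVec_smul]
    ext i j
    simp only [of_apply, neg_apply, add_apply, vecMulVec_apply, Pi.smul_apply, smul_eq_mul]
    ring
  have hdot : u ⬝ᵥ ((-2 : R) • t) = -2 := by
    rw [dotProduct_smul, dotProduct_comm, ht, smul_eq_mul, mul_one]
  rw [hfactor, det_mul, det_neg, det_one_add_vecMulVec, hdot]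
  ring

def lorentzEta (R : Type*) [One R] [Neg R] [Zero R] (n : ℕ) : Matrix (Fin n) (Fin n) R :=
  of fun i j => if i = j then (if (i : ℕ) = 0 then 1 else -1) else 0

theorem det_lorentzEta [CommRing R] {n : ℕ} (hn : n ≠ 0) :
    (lorentzEta R n).det = (-1) ^ (n + 1) := by
  obtain ⟨m, rfl⟩ := Nat.exists_eq_succ_of_ne_zero hn
  have hdiag :
      lorentzEta R (m + 1) = diagonal fun i : Fin (m + 1) => if (i : ℕ) = 0 then 1 else -1 := by
    ext i j
    by_cases h : i = j <;> simp [lorentzEta, diagonal, h]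
  rw [hdiag, det_diagonal, Fin.prod_univ_succ]
  simp [pow_succ]

theorem abs_det_of_transpose_mul_mul_eq_lorentzEta [Field R] [LinearOrder R]
    [IsStrictOrderedRing R] {n : ℕ} (hn : n ≠ 0) {G P : Matrix (Fin n) (Fin n) R}
    (hcong : Pᵀ * G * P = lorentzEta R n) :
    |G.det| = (-1) ^ (n + 1) * G.det := by
  have hdet : G.det * P.det ^ 2 = (-1) ^ (n + 1) := by
    rw [← det_lorentzEta hn, ← hcong, det_mul, det_mul, det_transpose]
    ring
  have hsign : (0 : R) < (-1) ^ (n + 1) * G.det := by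
    have hprod : ((-1 : R) ^ (n + 1) * G.det) * P.det ^ 2 = 1 := by
      rw [mul_assoc, hdet, ← sq, ← pow_mul', pow_mul, neg_one_sq, one_pow]
    exact pos_of_mul_pos_left (hprod ▸ one_pos) (sq_nonneg _)
  rw [← abs_of_pos hsign, abs_mul, abs_pow, abs_neg, abs_one, one_pow, one_mul]

end Matrix

theorem stmt_2_general {n : ℕ} (G : Matrix (Fin n) (Fin n) ℝ)
    (P : Matrix (Fin n) (Fin n) ℝ)
    (hcong : P.transpose * G * P =
      Matrix.of fun i j : Fin n =>
        if i = j then (if (i : ℕ) = 0 then (1 : ℝ) else -1) else 0)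
    (t : Fin n → ℝ) (ht : t ⬝ᵥ G.mulVec t = 1) :
    (Matrix.of fun i j : Fin n =>
        2 * G.mulVec t i * G.mulVec t j - G i j).det = |G.det| ∧
    |G.det| = (-1 : ℝ) ^ (n + 1) * G.det := by
  have hn : n ≠ 0 := by
    rintro rfl
    simp at ht
  have habs := Matrix.abs_det_of_transpose_mul_mul_eq_lorentzEta hn hcong
  refine ⟨?_, habs⟩
  rw [habs, Matrix.det_two_mul_mulVec_sub G t ht, Fintype.card_fin]

/-- For a Lorentzian symmetric bilinear form with matrix G (congruent to
η = diag(1,−1,...,−1)) and t with g(t,t)=1, the matrix G⁺ of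
g⁺(v,w) = 2 g(t,v) g(t,w) − g(v,w), i.e. G⁺ᵢⱼ = 2 tᵢ tⱼ − Gᵢⱼ with tᵢ = (G t)ᵢ,
satisfies det(G⁺) = |det G| = (−1)^{n+1} det G. -/
theorem stmt_2 {n : ℕ} (G : Matrix (Fin n) (Fin n) ℝ) (hsym : G.IsSymm)
    (P : Matrix (Fin n) (Fin n) ℝ) (hP : IsUnit P.det)
    (hcong : P.transpose * G * P =
      Matrix.of fun i j : Fin n =>
        if i = j then (if (i : ℕ) = 0 then (1 : ℝ) else -1) else 0)
    (t : Fin n → ℝ) (ht : t ⬝ᵥ G.mulVec t = 1) :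
    (Matrix.of fun i j : Fin n =>
        2 * G.mulVec t i * G.mulVec t j - G i j).det = |G.det| ∧
    |G.det| = (-1 : ℝ) ^ (n + 1) * G.det :=
  stmt_2_general G P hcong t ht
end

section
/- Let g be a symmetric bilinear form on ℝⁿ of Lorentzian signature (+,−,...,−) with matrix G, and t ∈ ℝⁿ with g(t,t) = 1. Then the Lebesgue volume of the ellipsoid E^t = {y ∈ ℝⁿ : 2·g(t,y)² − g(y,y) ≤ 1} equals Vol(𝔹)/√(|det G|), where 𝔹 is the Euclidean unit ball. -/
/-!
Pulling back along `P` turns `g` into the Minkowski form `η = diag(1, -1, …, -1)` and `t` into a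
vector `s` with `η(s, s) = 1`. In these coordinates Cauchy–Schwarz on the spatial parts shows
`2 η(s, u)² - η(u, u) > 0` for `u ≠ 0`, so the matrix `G⁺ = 2 (Gt)(Gt)ᵀ - G` of `g⁺` is positive
definite. Writing `G⁺ = -G (1 - 2 t (Gt)ᵀ)`, the matrix determinant lemma gives
`det G⁺ = ±det G`, hence `det G⁺ = |det G|`. Finally `Eᵗ` is the preimage of the unit ball under
the linear map `√G⁺`, whose determinant is `√(det G⁺)`.
-/

open Matrix MeasureTheory

def minkowskiMatrix (n : ℕ) : Matrix (Fin n) (Fin n) ℝ :=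
  Matrix.of fun i j => if i = j then (if (i : ℕ) = 0 then 1 else -1) else 0

theorem dotProduct_minkowskiMatrix_mulVec {m : ℕ} (a b : Fin (m + 1) → ℝ) :
    a ⬝ᵥ minkowskiMatrix (m + 1) *ᵥ b = a 0 * b 0 - Fin.tail a ⬝ᵥ Fin.tail b := by
  have : minkowskiMatrix (m + 1) = diagonal (Fin.cons 1 fun _ => -1) := by
    ext i j
    rcases eq_or_ne i j with rfl | hij
    · cases i using Fin.cases <;> simp [minkowskiMatrix]
    · simp [minkowskiMatrix, hij]
  simp [this, dotProduct, Fin.sum_univ_succ, Fin.tail, mulVec_diagonal, sub_eq_add_neg]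

theorem two_mul_sq_sub_lorentz_pos {ι : Type*} [Fintype ι] {s₀ u₀ : ℝ} {s u : ι → ℝ}
    (hs : s₀ ^ 2 - s ⬝ᵥ s = 1) (hu : u₀ ≠ 0 ∨ u ≠ 0) :
    0 < 2 * (s₀ * u₀ - s ⬝ᵥ u) ^ 2 - (u₀ ^ 2 - u ⬝ᵥ u) := by
  have hcs : (s ⬝ᵥ u) ^ 2 ≤ (s ⬝ᵥ s) * (u ⬝ᵥ u) := by
    simpa [dotProduct, sq] using Finset.sum_mul_sq_le_sq_mul_sq Finset.univ s u
  set σ := s ⬝ᵥ s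
  set b := u ⬝ᵥ u
  set c := s ⬝ᵥ u
  have hσ : 0 ≤ σ := dotProduct_self_star_nonneg s
  have hb : 0 ≤ b := dotProduct_self_star_nonneg u
  -- Completing the square in `s₀ u₀`; Cauchy–Schwarz then bounds the remainder below by `(1 + σ) b`.
  set Y := (1 + 2 * σ) * s₀ * u₀ - 2 * (1 + σ) * c
  have hkey : (1 + 2 * σ) * (1 + σ) * (2 * (s₀ * u₀ - c) ^ 2 - (u₀ ^ 2 - b))
      = Y ^ 2 + (1 + σ) * ((1 + 2 * σ) * b - 2 * c ^ 2) := by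
    linear_combination (1 + 2 * σ) * u₀ ^ 2 * hs
  have hY : 0 < Y ^ 2 + (1 + σ) * ((1 + 2 * σ) * b - 2 * c ^ 2) := by
    rcases hb.lt_or_eq with hb | hb
    · nlinarith [sq_nonneg Y]
    · have hu₀ : u₀ ≠ 0 := hu.resolve_right fun h => dotProduct_self_eq_zero.not.2 h hb.symm
      have hc : c = 0 := by nlinarith
      have hs₀ : s₀ ≠ 0 := by rintro rfl; nlinarith
      have hY₀ : 0 < Y ^ 2 := by
        rw [show Y = (1 + 2 * σ) * s₀ * u₀ by simp [Y, hc]]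
        positivity
      rw [hc, ← hb]; simpa using hY₀
  exact pos_of_mul_pos_right (hkey ▸ hY) (by positivity)

theorem minkowskiMatrix_two_mul_sq_sub_pos {m : ℕ} {s u : Fin (m + 1) → ℝ}
    (hs : s ⬝ᵥ minkowskiMatrix (m + 1) *ᵥ s = 1) (hu : u ≠ 0) :
    0 < 2 * (s ⬝ᵥ minkowskiMatrix (m + 1) *ᵥ u) ^ 2 - u ⬝ᵥ minkowskiMatrix (m + 1) *ᵥ u := by
  simp only [dotProduct_minkowskiMatrix_mulVec, ← sq] at hs ⊢
  refine two_mul_sq_sub_lorentz_pos hs ?_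
  contrapose! hu
  rw [← Fin.cons_self_tail u, hu.1, hu.2]
  ext i; cases i using Fin.cases <;> rfl

section

variable {n R : Type*} [Fintype n] [CommRing R]

theorem mulVec_dotProduct_mulVec_mulVec (P G : Matrix n n R) (a b : n → R) :
    P *ᵥ a ⬝ᵥ G *ᵥ (P *ᵥ b) = a ⬝ᵥ (Pᵀ * G * P) *ᵥ b := by
  simp only [← mulVec_mulVec, dotProduct_mulVec a, vecMul_transpose]

theorem dotProduct_smul_vecMulVec_sub_mulVec {G : Matrix n n R} (hG : G.IsSymm) (c : R)
    (t y : n → R) :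
    y ⬝ᵥ (c • vecMulVec (G *ᵥ t) (G *ᵥ t) - G) *ᵥ y = c * (t ⬝ᵥ G *ᵥ y) ^ 2 - y ⬝ᵥ G *ᵥ y := by
  have : G *ᵥ t ⬝ᵥ y = t ⬝ᵥ G *ᵥ y := by
    rw [dotProduct_mulVec, ← mulVec_transpose, hG.eq, dotProduct_comm]
  simp only [sub_mulVec, smul_mulVec, vecMulVec_mulVec, this, op_smul_eq_smul, dotProduct_sub,
    dotProduct_smul, dotProduct_comm y (G *ᵥ t), smul_eq_mul]
  ring

theorem det_smul_vecMulVec_sub [DecidableEq n] (G : Matrix n n R) (c : R) (t : n → R) :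
    (c • vecMulVec (G *ᵥ t) (G *ᵥ t) - G).det
      = (-1) ^ Fintype.card n * G.det * (1 - c * (t ⬝ᵥ G *ᵥ t)) := by
  have : c • vecMulVec (G *ᵥ t) (G *ᵥ t) - G = -G * (1 - c • vecMulVec t (G *ᵥ t)) := by
    rw [Matrix.neg_mul, Matrix.mul_sub, Matrix.mul_one, Matrix.mul_smul, mul_vecMulVec]
    abel
  rw [this, det_mul, det_neg, sub_eq_add_neg, ← neg_smul, ← smul_vecMulVec, vecMulVec_eq Unit,
    det_one_add_replicateCol_mul_replicateRow, dotProduct_smul, dotProduct_comm, smul_eq_mul]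
  ring

end

theorem posDef_two_smul_vecMulVec_sub {m : ℕ} {G P : Matrix (Fin (m + 1)) (Fin (m + 1)) ℝ}
    (hG : G.IsSymm) (hP : IsUnit P.det) (hcong : Pᵀ * G * P = minkowskiMatrix (m + 1))
    {t : Fin (m + 1) → ℝ} (ht : t ⬝ᵥ G *ᵥ t = 1) :
    ((2 : ℝ) • vecMulVec (G *ᵥ t) (G *ᵥ t) - G).PosDef := by
  have hsurj : ∀ x, ∃ u, P *ᵥ u = x := fun x =>
    ⟨P⁻¹ *ᵥ x, by rw [mulVec_mulVec, mul_nonsing_inv P hP, one_mulVec]⟩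
  refine .of_dotProduct_mulVec_pos ?_ fun x hx => ?_
  · simp [IsHermitian, hG.eq]
  obtain ⟨u, rfl⟩ := hsurj x
  obtain ⟨s, rfl⟩ := hsurj t
  rw [mulVec_dotProduct_mulVec_mulVec, hcong] at ht
  rw [star_trivial, dotProduct_smul_vecMulVec_sub_mulVec hG, mulVec_dotProduct_mulVec_mulVec,
    mulVec_dotProduct_mulVec_mulVec, hcong]
  exact minkowskiMatrix_two_mul_sq_sub_pos ht (by rintro rfl; simp at hx)

section

open scoped MatrixOrder

variable {n : Type*} [Fintype n] [DecidableEq n]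

theorem Matrix.PosSemidef.dotProduct_mulVec_self_eq_sum_sq {A : Matrix n n ℝ}
    (hA : A.PosSemidef) (y : n → ℝ) :
    y ⬝ᵥ A *ᵥ y = ∑ i, (CFC.sqrt A *ᵥ y) i ^ 2 := by
  have hS : (CFC.sqrt A)ᵀ = CFC.sqrt A := (CFC.sqrt_nonneg A).isSelfAdjoint
  conv_lhs => rw [← CFC.sqrt_mul_sqrt_self A hA.nonneg]
  rw [← mulVec_mulVec, dotProduct_mulVec, ← mulVec_transpose, hS]
  simp [dotProduct, sq]

theorem Matrix.PosDef.volume_setOf_dotProduct_mulVec_le_one {A : Matrix n n ℝ}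
    (hA : A.PosDef) :
    volume {y : n → ℝ | y ⬝ᵥ A *ᵥ y ≤ 1}
      = volume {y : n → ℝ | ∑ i, y i ^ 2 ≤ 1} / ENNReal.ofReal √A.det := by
  have hdet : (CFC.sqrt A).det = √A.det := by simpa using hA.posSemidef.det_sqrt
  have hpos : 0 < √A.det := Real.sqrt_pos.2 hA.det_pos
  have hset : {y | y ⬝ᵥ A *ᵥ y ≤ 1} = toLin' (CFC.sqrt A) ⁻¹' {x | ∑ i, x i ^ 2 ≤ 1} := by
    ext y
    simp [hA.posSemidef.dotProduct_mulVec_self_eq_sum_sq]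
  rw [hset, Measure.addHaar_preimage_linearMap _ (by simpa [hdet] using hpos.ne'),
    LinearMap.det_toLin', hdet, abs_inv, abs_of_pos hpos, ENNReal.ofReal_inv_of_pos hpos,
    div_eq_mul_inv, mul_comm]

end

/-- For a Lorentzian symmetric bilinear form with matrix G and t with g(t,t)=1,
the ellipsoid Eᵗ = {y : 2 g(t,y)² − g(y,y) ≤ 1} has Lebesgue volume
Vol(𝔹)/√|det G|. -/
theorem stmt_4 {n : ℕ} (G : Matrix (Fin n) (Fin n) ℝ) (hsym : G.IsSymm)
    (P : Matrix (Fin n) (Fin n) ℝ) (hP : IsUnit P.det)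
    (hcong : P.transpose * G * P =
      Matrix.of fun i j : Fin n =>
        if i = j then (if (i : ℕ) = 0 then (1 : ℝ) else -1) else 0)
    (t : Fin n → ℝ) (ht : t ⬝ᵥ G.mulVec t = 1) :
    volume {y : Fin n → ℝ | 2 * (t ⬝ᵥ G.mulVec y) ^ 2 - y ⬝ᵥ G.mulVec y ≤ 1}
      = volume {y : Fin n → ℝ | ∑ i, (y i) ^ 2 ≤ 1}
        / ENNReal.ofReal (Real.sqrt |G.det|) := by
  obtain ⟨m, rfl⟩ : ∃ m, n = m + 1 :=
    Nat.exists_eq_add_one.2 (Nat.pos_of_ne_zero fun h => by subst h; simp at ht)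
  have hpos := posDef_two_smul_vecMulVec_sub hsym hP hcong ht
  have hdet : ((2 : ℝ) • vecMulVec (G *ᵥ t) (G *ᵥ t) - G).det = |G.det| := by
    rw [← abs_of_pos hpos.det_pos, det_smul_vecMulVec_sub, ht]
    norm_num [abs_mul]
  simp_rw [← dotProduct_smul_vecMulVec_sub_mulVec hsym]
  rw [hpos.volume_setOf_dotProduct_mulVec_le_one, hdet]
end
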